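/- arXiv:0911.2185 — 3 statements merged into one kernel-verified Lean document; each statement's English description precedes it below -/
import Mathlib

section
/- Let α and β be antisymmetric real 7×7 matrices satisfying Σ_{b,c} φ₀_{abc} α_{bc} = 0 and Σ_{b,c} φ₀_{abc} β_{bc} = 0 for every index a. Then their matrix commutator [α, β] = αβ − βα also satisfies Σ_{b,c} φ₀_{abc} [α,β]_{bc} = 0 for every a. (Hence 𝔤₂ = {α ∈ 𝔰𝔬(7) : φ₀_{abc} α^{bc} = 0} is a Lie subalgebra of 𝔰𝔬(7).) -/
open scoped BigOperators

noncomputable section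

/-- Kronecker delta `δ` on `Fin 7`. -/
def kd (a b : Fin 7) : ℝ := if a = b then 1 else 0

/-- The elementary alternating 3-tensor supported on permutations of `(i, j, k)`. -/
def trip (i j k a b c : Fin 7) : ℝ :=
  (if a = i ∧ b = j ∧ c = k then (1 : ℝ) else 0)
    + (if a = j ∧ b = k ∧ c = i then (1 : ℝ) else 0)
    + (if a = k ∧ b = i ∧ c = j then (1 : ℝ) else 0)
    - (if a = i ∧ b = k ∧ c = j then (1 : ℝ) else 0)
    - (if a = k ∧ b = j ∧ c = i then (1 : ℝ) else 0)
    - (if a = j ∧ b = i ∧ c = k then (1 : ℝ) else 0)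

/-- The standard `G₂` 3-form `φ₀` on `ℝ⁷`.  Indices `0, …, 6` correspond to the
paper's `1, …, 7`, so this is
`e^{123} + e^{145} + e^{167} + e^{246} - e^{257} - e^{347} - e^{356}`. -/
def phi0 (a b c : Fin 7) : ℝ :=
  trip 0 1 2 a b c + trip 0 3 4 a b c + trip 0 5 6 a b c + trip 1 3 5 a b c
    - trip 1 4 6 a b c - trip 2 3 6 a b c - trip 2 4 5 a b c

/-- The totally antisymmetric Levi-Civita symbol `ε̂` on seven indices,
with `ε̂_{1234567} = 1`. -/
def eps7 (a b c d e f g : Fin 7) : ℝ :=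
  if h : Function.Bijective ![a, b, c, d, e, f, g] then
    ((Equiv.Perm.sign (Equiv.ofBijective _ h) : ℤ) : ℝ)
  else 0

/-- The 4-form `ψ₀ = ⋆φ₀`, the Euclidean Hodge dual of `φ₀`:
`ψ₀ = e^{4567} + e^{2367} + e^{2345} + e^{1357} - e^{1346} - e^{1256} - e^{1247}`. -/
def psi0 (m n p q : Fin 7) : ℝ :=
  (1 / 6 : ℝ) * ∑ r, ∑ s, ∑ t, eps7 m n p q r s t * phi0 r s t


/-!
`𝔤₂` is the stabiliser of `φ₀` in `𝔰𝔬(7)` under the infinitesimal action of matrices on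
3-tensors, and stabilisers are closed under commutators because that action is a Lie algebra
homomorphism. Identifying the stabiliser with the contraction condition is a finite check:
`M · φ₀` is alternating, and for antisymmetric `M` each of its components `(a, b, c)` with
`a < b < c` is either `0` or `±½ ∑ b' c', φ₀ d b' c' M b' c'` for a single index `d`.
-/

open scoped Matrix

section Alternating

variable {ι R : Type*} [AddGroup R]

def IsAlternating3 (T : ι → ι → ι → R) : Prop :=
  (∀ a b c, T b a c = -T a b c) ∧ ∀ a b c, T a c b = -T a b c

theorem IsAlternating3.eq_zero_of_forall_lt [LinearOrder ι] [IsAddTorsionFree R]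
    {T : ι → ι → ι → R} (hT : IsAlternating3 T)
    (h : ∀ a b c, a < b → b < c → T a b c = 0) : T = 0 := by
  obtain ⟨h12, h23⟩ := hT
  have h11 : ∀ a c, T a a c = 0 := fun a c => self_eq_neg.mp (h12 a a c)
  have h22 : ∀ a b, T a b b = 0 := fun a b => self_eq_neg.mp (h23 a b b)
  funext a b c
  show T a b c = 0
  have := lt_trichotomy a b; have := lt_trichotomy b c; have := lt_trichotomy a c
  grind

end Alternating

section Action

variable {ι R : Type*} [Fintype ι] [CommRing R]

/-- The derivative at the identity of the action of `GL(ι)` on contravariant 3-tensors. -/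
def actTensor3 (M : Matrix ι ι R) (T : ι → ι → ι → R) : ι → ι → ι → R :=
  fun a b c => ∑ m, (M a m * T m b c + M b m * T a m c + M c m * T a b m)

theorem actTensor3_zero (M : Matrix ι ι R) : actTensor3 M (0 : ι → ι → ι → R) = 0 := by
  funext a b c
  simp [actTensor3]

theorem sum_sum_mul_mul_swap (f g : ι → R) (h : ι → ι → R) :
    ∑ x, ∑ i, f x * (g i * h x i) = ∑ x, ∑ i, g x * (f i * h i x) := by
  rw [Finset.sum_comm]
  simp only [mul_left_comm]

theorem actTensor3_commutator (M N : Matrix ι ι R) (T : ι → ι → ι → R) :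
    actTensor3 (M * N - N * M) T =
      actTensor3 M (actTensor3 N T) - actTensor3 N (actTensor3 M T) := by
  funext a b c
  simp only [actTensor3, Pi.sub_apply, Matrix.sub_apply, Matrix.mul_apply, sub_mul,
    Finset.sum_mul, Finset.mul_sum, mul_add, Finset.sum_add_distrib, Finset.sum_sub_distrib,
    mul_assoc]
  -- the terms in which `M` and `N` act on different slots cancel in pairs
  rw [sum_sum_mul_mul_swap (M a) (N b), sum_sum_mul_mul_swap (M a) (N c),
    sum_sum_mul_mul_swap (M b) (N c), sum_sum_mul_mul_swap (M b) (N a),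
    sum_sum_mul_mul_swap (M c) (N a), sum_sum_mul_mul_swap (N b) (M c)]
  simp only [Finset.sum_comm (γ := ι) (f := fun x i => M _ i * (N i x * _)),
    Finset.sum_comm (γ := ι) (f := fun x i => N _ i * (M i x * _))]
  abel

theorem IsAlternating3.actTensor3 {T : ι → ι → ι → R} (hT : IsAlternating3 T)
    (M : Matrix ι ι R) : IsAlternating3 (actTensor3 M T) := by
  obtain ⟨h12, h23⟩ := hT
  constructor <;> intro a b c <;> simp only [_root_.actTensor3] <;>
    rw [← Finset.sum_neg_distrib] <;> refine Finset.sum_congr rfl fun m _ => ?_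
  · rw [h12 a m c, h12 m b c, h12 a b m]; ring
  · rw [h23 m c b, h23 a c m, h23 a m b]; ring

end Action

theorem Matrix.transpose_commutator {n R : Type*} [Fintype n] [CommRing R] {A B : Matrix n n R}
    (hA : Aᵀ = -A) (hB : Bᵀ = -B) : (A * B - B * A)ᵀ = -(A * B - B * A) := by
  rw [Matrix.transpose_sub, Matrix.transpose_mul, Matrix.transpose_mul, hA, hB]
  noncomm_ring

theorem Matrix.exists_eq_sub_transpose {n R : Type*} [Ring R] [Invertible (2 : R)]
    {M : Matrix n n R} (hM : Mᵀ = -M) : ∃ N : Matrix n n R, M = N - Nᵀ :=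
  ⟨(⅟2 : R) • M, by
    rw [Matrix.transpose_smul, hM, smul_neg, sub_neg_eq_add, ← add_smul, invOf_two_add_invOf_two,
      one_smul]⟩

theorem isAlternating3_trip (i j k : Fin 7) : IsAlternating3 (trip i j k) := by
  constructor <;> intro a b c <;> simp only [trip, and_comm, and_left_comm] <;> ring

theorem isAlternating3_phi0 : IsAlternating3 phi0 := by
  constructor <;> intro a b c
  · simp only [phi0, (isAlternating3_trip _ _ _).1 a b c]; ring
  · simp only [phi0, (isAlternating3_trip _ _ _).2 a b c]; ring

theorem actTensor3_phi0_eq_zero {M : Matrix (Fin 7) (Fin 7) ℝ} (hM : Mᵀ = -M)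
    (h : ∀ a, ∑ b, ∑ c, phi0 a b c * M b c = 0) : actTensor3 M phi0 = 0 := by
  obtain ⟨N, rfl⟩ := Matrix.exists_eq_sub_transpose hM
  refine (isAlternating3_phi0.actTensor3 _).eq_zero_of_forall_lt fun a b c hab hbc => ?_
  have h0 := h 0; have h1 := h 1; have h2 := h 2; have h3 := h 3
  have h4 := h 4; have h5 := h 5; have h6 := h 6
  simp [Fin.sum_univ_seven, phi0, trip] at h0 h1 h2 h3 h4 h5 h6
  fin_cases a <;> fin_cases b <;> fin_cases c <;> simp at hab hbc <;>
    simp [actTensor3, Fin.sum_univ_seven, phi0, trip] <;> linarith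

theorem phi0_contract_eq_zero_of_actTensor3_eq_zero {M : Matrix (Fin 7) (Fin 7) ℝ}
    (hM : Mᵀ = -M) (h : actTensor3 M phi0 = 0) (d : Fin 7) :
    ∑ b, ∑ c, phi0 d b c * M b c = 0 := by
  obtain ⟨N, rfl⟩ := Matrix.exists_eq_sub_transpose hM
  have h' (a b c : Fin 7) : actTensor3 (N - Nᵀ) phi0 a b c = 0 := by rw [h]; rfl
  -- `∑ b c, φ₀ d b c M b c = ±2 (M · φ₀) a b c` whenever `{a, b, c, d}` is the complement of a
  -- line of `φ₀`.
  fin_cases d <;> [have e := h' 2 4 6; have e := h' 0 3 6; have e := h' 0 3 5; have e := h' 4 5 6;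
      have e := h' 0 2 6; have e := h' 0 1 4; have e := h' 0 1 3] <;>
    simp [actTensor3, Fin.sum_univ_seven, phi0, trip] at e ⊢ <;> linarith

/-- If `α, β ∈ 𝔰𝔬(7)` satisfy `φ₀_{abc} α^{bc} = 0` and
`φ₀_{abc} β^{bc} = 0` for every `a`, then so does their commutator `[α, β] = αβ - βα`;
hence `𝔤₂ = {α ∈ 𝔰𝔬(7) : φ₀_{abc} α^{bc} = 0}` is a Lie subalgebra of `𝔰𝔬(7)`. -/
theorem g2_commutator_closed (α β : Matrix (Fin 7) (Fin 7) ℝ)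
    (hα₁ : α.transpose = -α) (hβ₁ : β.transpose = -β)
    (hα₂ : ∀ a, ∑ b, ∑ c, phi0 a b c * α b c = 0)
    (hβ₂ : ∀ a, ∑ b, ∑ c, phi0 a b c * β b c = 0) :
    ∀ a, ∑ b, ∑ c, phi0 a b c * (α * β - β * α) b c = 0 := by
  refine phi0_contract_eq_zero_of_actTensor3_eq_zero (Matrix.transpose_commutator hα₁ hβ₁) ?_
  rw [actTensor3_commutator, actTensor3_phi0_eq_zero hα₁ hα₂, actTensor3_phi0_eq_zero hβ₁ hβ₂,
    actTensor3_zero, actTensor3_zero, sub_zero]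
end
end

section
/- The real vector space 𝔤₂ = {α : α an antisymmetric real 7×7 matrix with Σ_{b,c} φ₀_{abc} α_{bc} = 0 for every index a} has dimension 14. -/
/-!
Inside `𝔰𝔬(7)`, which has dimension `21`, `𝔤₂` is the kernel of the contraction
`α ↦ (a ↦ Σ_{b,c} φ₀_{abc} α_{bc})`. This contraction maps `𝔰𝔬(7)` onto `ℝ⁷`: as `φ₀` is
alternating, `e_i ∧ e_j` goes to `2 φ₀(·, e_i, e_j)`, and since every pair of indices lies on
exactly one line `{a, i, j}` of the Fano plane carrying `φ₀`, this is `±2 e_a`. Rank–nullity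
gives `21 - 7 = 14`.
-/

open scoped BigOperators

noncomputable section

/-- The Lie algebra `𝔤₂` realized as the subspace of antisymmetric `7 × 7` real matrices
`α` satisfying `Σ_{b,c} φ₀_{abc} α_{bc} = 0` for every `a`. -/
def g2 : Submodule ℝ (Matrix (Fin 7) (Fin 7) ℝ) where
  carrier := {α | α.transpose = -α ∧ ∀ a, ∑ b, ∑ c, phi0 a b c * α b c = 0}
  zero_mem' := by
    refine ⟨by simp, fun a => by simp⟩
  add_mem' := by
    intro α β hα hβ
    obtain ⟨hα₁, hα₂⟩ := hα
    obtain ⟨hβ₁, hβ₂⟩ := hβ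
    refine ⟨by rw [Matrix.transpose_add, hα₁, hβ₁, neg_add], fun a => ?_⟩
    have h : ∀ b c : Fin 7, phi0 a b c * (α + β) b c
        = phi0 a b c * α b c + phi0 a b c * β b c := by
      intro b c; simp [Matrix.add_apply, mul_add]
    simp only [h, Finset.sum_add_distrib, hα₂ a, hβ₂ a, add_zero]
  smul_mem' := by
    intro r α hα
    obtain ⟨hα₁, hα₂⟩ := hα
    refine ⟨by rw [Matrix.transpose_smul, hα₁, smul_neg], fun a => ?_⟩
    have h : ∀ b c : Fin 7, phi0 a b c * (r • α) b c = r * (phi0 a b c * α b c) := by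
      intro b c; simp [Matrix.smul_apply]; ring
    simp only [h, ← Finset.mul_sum, hα₂ a, mul_zero]

open Module LieAlgebra.Orthogonal

-- `so n K` lives in the commutator Lie ring of matrices, which is not a global instance.
attribute [local instance] LieRing.ofAssociativeRing

section SkewSymmetric

variable {n K : Type*} [Fintype n] [LinearOrder n] [Field K] [NeZero (2 : K)]

def soEquivStrictUpper : (so n K).toSubmodule ≃ₗ[K] ({p : n × n // p.1 < p.2} → K) where
  toFun A p := A.1 p.1.1 p.1.2
  invFun f := ⟨Matrix.of fun i j =>
      if h : i < j then f ⟨(i, j), h⟩ else if h : j < i then -f ⟨(j, i), h⟩ else 0, by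
    rw [LieSubalgebra.mem_toSubmodule, mem_so]
    ext i j
    rcases lt_trichotomy i j with h | rfl | h
    · simp [h, h.not_gt]
    · simp
    · simp [h, h.not_gt]⟩
  map_add' A B := rfl
  map_smul' c A := rfl
  left_inv A := by
    obtain ⟨A, hA⟩ := A
    rw [LieSubalgebra.mem_toSubmodule, mem_so] at hA
    have hskew : ∀ i j, A j i = -A i j := fun i j => by
      simpa using congrFun (congrFun hA i) j
    have hdiag : ∀ i, A i i = 0 := fun i =>
      (mul_eq_zero.mp (by linear_combination hskew i i : (2 : K) * A i i = 0)).resolve_left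
        two_ne_zero
    ext i j
    rcases lt_trichotomy i j with h | rfl | h
    · simp [h]
    · simp [hdiag i]
    · simp [h, h.not_gt, hskew i j]
  right_inv f := by
    ext p
    simp [p.2]

theorem finrank_so : finrank K (so n K).toSubmodule = Fintype.card {p : n × n // p.1 < p.2} := by
  rw [soEquivStrictUpper.finrank_eq, finrank_fintype_fun_eq_card]

end SkewSymmetric

section Contraction

variable {n K : Type*} [Fintype n] [Field K]

def contract (φ : n → n → n → K) : Matrix n n K →ₗ[K] (n → K) where
  toFun α a := ∑ b, ∑ c, φ a b c * α b c
  map_add' α β := by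
    ext a
    simp only [Matrix.add_apply, mul_add, Finset.sum_add_distrib, Pi.add_apply]
  map_smul' r α := by
    ext a
    simp only [Matrix.smul_apply, smul_eq_mul, Finset.mul_sum, Pi.smul_apply, RingHom.id_apply,
      mul_left_comm]

variable [DecidableEq n]

lemma contract_single_sub_single {φ : n → n → n → K} (hφ : ∀ a b c, φ a c b = -φ a b c)
    (i j : n) :
    contract φ (Matrix.single i j 1 - Matrix.single j i 1) = (2 : K) • fun a => φ a i j := by
  ext a
  simp only [contract, LinearMap.coe_mk, AddHom.coe_mk, Matrix.sub_apply, Matrix.single_apply,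
    ite_and, mul_sub, mul_ite, mul_one, mul_zero, Finset.sum_sub_distrib, Finset.sum_ite_irrel,
    Finset.sum_ite_eq, Finset.mem_univ, if_true, Finset.sum_const_zero, hφ a j i, Pi.smul_apply,
    smul_eq_mul]
  ring

lemma single_sub_single_mem_so (i j : n) :
    Matrix.single i j (1 : K) - Matrix.single j i 1 ∈ (so n K).toSubmodule := by
  rw [LieSubalgebra.mem_toSubmodule, mem_so]
  simp [Matrix.transpose_sub, Matrix.transpose_single]

theorem contract_comp_subtype_surjective [NeZero (2 : K)] {φ : n → n → n → K}
    (hφ : ∀ a b c, φ a c b = -φ a b c)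
    (hsingle : ∀ a, ∃ i j, (fun a' => φ a' i j) = Pi.single a 1) :
    Function.Surjective (contract φ ∘ₗ (so n K).toSubmodule.subtype) := by
  rw [← LinearMap.range_eq_top, eq_top_iff, ← (Pi.basisFun K n).span_eq, Submodule.span_le]
  rintro _ ⟨a, rfl⟩
  obtain ⟨i, j, hij⟩ := hsingle a
  refine ⟨(2⁻¹ : K) • ⟨_, single_sub_single_mem_so i j⟩, ?_⟩
  simp [contract_single_sub_single hφ, hij, smul_smul, inv_mul_cancel₀ (two_ne_zero' K)]

end Contraction

lemma phi0_swap (a b c : Fin 7) : phi0 a c b = -phi0 a b c := by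
  simp only [phi0, trip, and_comm, and_left_comm]
  ring

lemma phi0_exists_eq_single (a : Fin 7) : ∃ i j, (fun a' => phi0 a' i j) = Pi.single a 1 := by
  refine ⟨![1, 2, 0, 4, 0, 6, 0] a, ![2, 0, 1, 0, 3, 0, 5] a, ?_⟩
  ext a'
  fin_cases a <;> fin_cases a' <;> simp [phi0, trip]

lemma g2_eq_map_ker :
    g2 = (LinearMap.ker (contract phi0 ∘ₗ (so (Fin 7) ℝ).toSubmodule.subtype)).map
      (so (Fin 7) ℝ).toSubmodule.subtype := by
  ext α
  simp [g2, contract, funext_iff, and_comm]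

/-- The real vector space `𝔤₂` has dimension `14`. -/
theorem g2_dim_fourteen : Module.finrank ℝ g2 = 14 := by
  rw [g2_eq_map_ker, Submodule.finrank_map_subtype_eq]
  set f := contract phi0 ∘ₗ (so (Fin 7) ℝ).toSubmodule.subtype
  have hrange : finrank ℝ (LinearMap.range f) = 7 := by
    rw [LinearMap.range_eq_top.mpr (contract_comp_subtype_surjective phi0_swap
      phi0_exists_eq_single), finrank_top, finrank_fin_fun]
  have hso : finrank ℝ (so (Fin 7) ℝ).toSubmodule = 21 := by
    rw [finrank_so]
    decide
  have hrank := f.finrank_range_add_finrank_ker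
  omega
end
end

section
/- Let R : (Fin 7)⁴ → ℝ satisfy the symmetries of a Riemann curvature tensor: R_{abcd} = −R_{bacd} = −R_{abdc} = R_{cdab}, and the first Bianchi identity R_{abcd} + R_{acdb} + R_{adbc} = 0. Then for all indices b, c: Σ_{a,e,f} R_{abef} ψ₀_{efca} = 0; that is, the metric contraction g^{ad} R_{abef} ψ₀^{ef}{}_{cd} vanishes identically. -/
/-!
`ψ₀` is alternating, so `ψ₀_{efca}` is invariant under the cyclic (hence even) permutation of
`e, f, a`. Averaging the contraction over this 3-cycle replaces `R_{abef}` by its cyclic sum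
`R_{abef} + R_{ebfa} + R_{fbae}`, which vanishes by the first Bianchi identity combined with
antisymmetry in the first pair.
-/

open scoped BigOperators

noncomputable section

open Finset

def leviCivita {α : Type*} [Fintype α] [DecidableEq α] (v : α → α) : ℤ :=
  if h : Function.Bijective v then Equiv.Perm.sign (Equiv.ofBijective v h) else 0

theorem leviCivita_comp_perm {α : Type*} [Fintype α] [DecidableEq α] (v : α → α)
    (σ : Equiv.Perm α) : leviCivita (v ∘ σ) = Equiv.Perm.sign σ * leviCivita v := by
  by_cases hv : Function.Bijective v
  · have hvσ : Function.Bijective (v ∘ σ) := hv.comp σ.bijective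
    have hcomp : Equiv.ofBijective (v ∘ σ) hvσ = Equiv.ofBijective v hv * σ :=
      Equiv.ext fun _ => rfl
    rw [leviCivita, leviCivita, dif_pos hv, dif_pos hvσ, hcomp, map_mul, Units.val_mul, mul_comm]
  · have hvσ : ¬ Function.Bijective (v ∘ σ) := fun h => hv <| by
      simpa [Function.comp_assoc] using h.comp σ.symm.bijective
    rw [leviCivita, leviCivita, dif_neg hv, dif_neg hvσ, mul_zero]

theorem eps7_eq_leviCivita (a b c d e f g : Fin 7) :
    eps7 a b c d e f g = leviCivita ![a, b, c, d, e, f, g] := by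
  unfold eps7 leviCivita
  split_ifs <;> simp

theorem eps7_rotate (e f c a r s t : Fin 7) : eps7 f a c e r s t = eps7 e f c a r s t := by
  -- the 3-cycle `0 ↦ 1 ↦ 3 ↦ 0` of argument positions
  set σ : Equiv.Perm (Fin 7) := Equiv.swap 0 3 * Equiv.swap 0 1
  have hσ : ![e, f, c, a, r, s, t] ∘ σ = ![f, a, c, e, r, s, t] := by
    funext x
    fin_cases x <;> rfl
  have hsign : Equiv.Perm.sign σ = 1 := by
    rw [map_mul, Equiv.Perm.sign_swap (by decide), Equiv.Perm.sign_swap (by decide)]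
    rfl
  rw [eps7_eq_leviCivita, eps7_eq_leviCivita, ← hσ, leviCivita_comp_perm, hsign, Units.val_one,
    one_mul]

theorem psi0_rotate (e f c a : Fin 7) : psi0 f a c e = psi0 e f c a := by
  simp only [psi0, eps7_rotate]

theorem sum_sum_sum_rotate {ι M : Type*} [Fintype ι] [AddCommMonoid M] (G : ι → ι → ι → M) :
    ∑ a, ∑ e, ∑ f, G a e f = ∑ a, ∑ e, ∑ f, G f a e := by
  rw [sum_comm]
  exact sum_congr rfl fun _ _ => sum_comm

theorem sum_mul_eq_zero_of_cyclic {ι 𝕜 : Type*} [Fintype ι] [Field 𝕜] [CharZero 𝕜]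
    (Q T : ι → ι → ι → 𝕜) (hQ : ∀ a e f, Q a e f + Q e f a + Q f a e = 0)
    (hT : ∀ a e f, T a e f = T e f a) :
    ∑ a, ∑ e, ∑ f, Q a e f * T a e f = 0 := by
  set S := ∑ a, ∑ e, ∑ f, Q a e f * T a e f
  have h₁ : S = ∑ a, ∑ e, ∑ f, Q f a e * T a e f := (sum_sum_sum_rotate _).trans <|
    sum_congr rfl fun a _ => sum_congr rfl fun e _ => sum_congr rfl fun f _ => by
      rw [hT f a e]
  have h₂ : S = ∑ a, ∑ e, ∑ f, Q e f a * T a e f := h₁.trans <| (sum_sum_sum_rotate _).trans <|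
    sum_congr rfl fun a _ => sum_congr rfl fun e _ => sum_congr rfl fun f _ => by
      rw [hT f a e]
  have h₃ : (3 : 𝕜) * S = 0 := by
    calc (3 : 𝕜) * S
        = S + ∑ a, ∑ e, ∑ f, Q e f a * T a e f + ∑ a, ∑ e, ∑ f, Q f a e * T a e f := by
          rw [← h₁, ← h₂]; ring
      _ = ∑ a, ∑ e, ∑ f, (Q a e f + Q e f a + Q f a e) * T a e f := by
          simp only [S, ← sum_add_distrib, add_mul]
      _ = 0 := by simp only [hQ, zero_mul, sum_const_zero]
  simpa using h₃

theorem cyclic_sum_eq_zero_of_bianchi {ι M : Type*} [AddCommGroup M] (R : ι → ι → ι → ι → M)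
    (hanti₁ : ∀ a b c d, R a b c d = -R b a c d)
    (hbianchi : ∀ a b c d, R a b c d + R a c d b + R a d b c = 0) (b a e f : ι) :
    R a b e f + R e b f a + R f b a e = 0 := by
  rw [hanti₁ a, hanti₁ e, hanti₁ f, ← neg_add, ← neg_add, hbianchi, neg_zero]

theorem curvature_psi_contraction_vanishes_general (R : Fin 7 → Fin 7 → Fin 7 → Fin 7 → ℝ)
    (hanti₁ : ∀ a b c d, R a b c d = -R b a c d)
    (hbianchi : ∀ a b c d, R a b c d + R a c d b + R a d b c = 0) :
    ∀ b c, ∑ a, ∑ e, ∑ f, R a b e f * psi0 e f c a = 0 := by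
  intro b c
  exact sum_mul_eq_zero_of_cyclic (fun a e f => R a b e f) (fun a e f => psi0 e f c a)
    (cyclic_sum_eq_zero_of_bianchi R hanti₁ hbianchi b) fun a e f => (psi0_rotate e f c a).symm

/-- If `R` has the symmetries of a Riemann curvature tensor
(antisymmetry in the first and last pairs, pair symmetry and the first Bianchi
identity), then the contraction `g^{ad} R_{abef} ψ₀^{ef}{}_{cd}` vanishes:
`Σ_{a,e,f} R_{abef} ψ₀_{efca} = 0` for all `b`, `c`. -/
theorem curvature_psi_contraction_vanishes (R : Fin 7 → Fin 7 → Fin 7 → Fin 7 → ℝ)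
    (hanti₁ : ∀ a b c d, R a b c d = -R b a c d)
    (hanti₂ : ∀ a b c d, R a b c d = -R a b d c)
    (hpair : ∀ a b c d, R a b c d = R c d a b)
    (hbianchi : ∀ a b c d, R a b c d + R a c d b + R a d b c = 0) :
    ∀ b c, ∑ a, ∑ e, ∑ f, R a b e f * psi0 e f c a = 0 :=
  curvature_psi_contraction_vanishes_general R hanti₁ hbianchi
end
end
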